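/- Projection lemma, vertex-expansion version: Let P ⊂ ℝ^d be a 0/1 polytope such that the projection π_k onto some k coordinates is surjective onto {0,1}^k on vertices and every fiber over a vertex of the k-cube contains at most c vertices of P. Then the vertex expansion of the graph of P is at least h_k/(2c), where h_k is the vertex expansion of the k-cube graph. -/
import Mathlib


open scoped BigOperators Classical

/-- A face of `P ⊆ ℝ^d`: the subset of `P` where a linear functional valid on `P`
attains the value `c₀`. -/
def IsFaceOf {d : ℕ} (P F : Set (Fin d → ℝ)) : Prop :=
  ∃ (c : Fin d → ℝ) (c₀ : ℝ), (∀ x ∈ P, ∑ i, c i * x i ≤ c₀) ∧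
    F = {x ∈ P | ∑ i, c i * x i = c₀}

/-- A vertex of `P` is a point whose singleton is a face of `P`. -/
def IsVertexOf {d : ℕ} (P : Set (Fin d → ℝ)) (v : Fin d → ℝ) : Prop := IsFaceOf P {v}

/-- An edge of `P` is a segment between two distinct points that is a face of `P`. -/
def IsEdgeOf {d : ℕ} (P : Set (Fin d → ℝ)) (u v : Fin d → ℝ) : Prop :=
  u ≠ v ∧ IsFaceOf P (segment ℝ u v)

/-- The vertex set of `P`. -/
def polyVerts {d : ℕ} (P : Set (Fin d → ℝ)) : Set (Fin d → ℝ) := {v | IsVertexOf P v}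

/-- The outside neighborhood of `S` in the graph of `P`: vertices of `P` not in `S`
joined by an edge of `P` to some vertex in `S`. -/
def polyNbhd {d : ℕ} (P S : Set (Fin d → ℝ)) : Set (Fin d → ℝ) :=
  {v | IsVertexOf P v ∧ v ∉ S ∧ ∃ u ∈ S, IsEdgeOf P u v}

/-- The vertex expansion of the graph of `P` is at least `α`. -/
def VertexExpansionAtLeast {d : ℕ} (P : Set (Fin d → ℝ)) (α : ℝ) : Prop :=
  ∀ S : Set (Fin d → ℝ), S ⊆ polyVerts P → S.Nonempty →
    2 * S.ncard ≤ (polyVerts P).ncard → α * S.ncard ≤ (polyNbhd P S).ncard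

/-- The embedding of `{0,1}^d` (as `Fin d → Fin 2`) into `ℝ^d`. -/
def toCube {d : ℕ} (w : Fin d → Fin 2) : Fin d → ℝ := fun i => ((w i : ℕ) : ℝ)

/-- Two vertices of the hypercube `{0,1}^k` are adjacent iff they differ in exactly
one coordinate. -/
def CubeAdj {k : ℕ} (u v : Fin k → Fin 2) : Prop :=
  (Finset.univ.filter fun i => u i ≠ v i).card = 1

/-- The outside neighborhood of a set of hypercube vertices. -/
noncomputable def cubeNbhd {k : ℕ} (S : Finset (Fin k → Fin 2)) : Finset (Fin k → Fin 2) :=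
  Finset.univ.filter fun v => v ∉ S ∧ ∃ u ∈ S, CubeAdj u v

/-- The vertex expansion of the `k`-cube graph:
`min{|N(S)|/|S| : ∅ ≠ S ⊆ {0,1}^k, |S| ≤ 2^k/2}`. -/
noncomputable def cubeVertexExpansion (k : ℕ) : ℝ :=
  sInf {r : ℝ | ∃ S : Finset (Fin k → Fin 2), S.Nonempty ∧ 2 * S.card ≤ 2 ^ k ∧
    r = ((cubeNbhd S).card : ℝ) / (S.card : ℝ)}

namespace PLV

variable {d : ℕ}

/-- dot product functional -/
def dot (c x : Fin d → ℝ) : ℝ := ∑ i, c i * x i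

lemma dot_isLinear (c : Fin d → ℝ) : IsLinearMap ℝ (dot c) := by
  constructor
  · intro x y; simp [dot, mul_add, Finset.sum_add_distrib]
  · intro t x; simp [dot, Finset.mul_sum, smul_eq_mul, mul_left_comm]

lemma dot_sum {α : Type*} (c : Fin d → ℝ) (s : Finset α) (w : α → ℝ) (z : α → Fin d → ℝ) :
    dot c (∑ y ∈ s, w y • z y) = ∑ y ∈ s, w y * dot c (z y) := by
  simp only [dot, Finset.sum_apply, Pi.smul_apply, smul_eq_mul, Finset.mul_sum]
  rw [Finset.sum_comm]
  exact Finset.sum_congr rfl fun y _ => Finset.sum_congr rfl fun i _ => by ring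

lemma dot_le_on_hull {F : Finset (Fin d → ℝ)} {c : Fin d → ℝ} {c₀ : ℝ}
    (h : ∀ y ∈ F, dot c y ≤ c₀) {x : Fin d → ℝ} (hx : x ∈ convexHull ℝ (F : Set (Fin d → ℝ))) :
    dot c x ≤ c₀ := by
  have : convexHull ℝ (F : Set (Fin d → ℝ)) ⊆ {x | dot c x ≤ c₀} := by
    apply convexHull_min
    · intro y hy; exact h y (by exact_mod_cast hy)
    · exact convex_halfSpace_le (dot_isLinear c) c₀
  exact this hx

/-- exposed subset of a finite generating set -/
def Exp (F F' : Finset (Fin d → ℝ)) : Prop :=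
  ∃ c c₀, (∀ y ∈ F, dot c y ≤ c₀) ∧ F' = F.filter (fun y => dot c y = c₀)

lemma Exp.subset {F F' : Finset (Fin d → ℝ)} (h : Exp F F') : F' ⊆ F := by
  obtain ⟨c, c₀, _, rfl⟩ := h; exact Finset.filter_subset _ _

lemma exp_refl (F : Finset (Fin d → ℝ)) : Exp F F :=
  ⟨0, 0, by simp [dot], by simp [dot]⟩

/-- The face of the hull is the hull of the exposed generators. -/
lemma face_hull {F : Finset (Fin d → ℝ)} {c : Fin d → ℝ} {c₀ : ℝ}
    (h : ∀ y ∈ F, dot c y ≤ c₀) :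
    {x ∈ convexHull ℝ (F : Set (Fin d → ℝ)) | dot c x = c₀} =
      convexHull ℝ ((F.filter (fun y => dot c y = c₀) : Finset (Fin d → ℝ)) : Set (Fin d → ℝ)) := by
  apply Set.Subset.antisymm
  · rintro x ⟨hxP, hxc⟩
    rw [Finset.mem_convexHull'] at hxP
    obtain ⟨w, hw0, hw1, hwx⟩ := hxP
    have hdot : ∑ y ∈ F, w y * dot c y = c₀ := by
      have := dot_sum c F w (fun y => y)
      rw [hwx] at this
      rw [← this, hxc]
    have hzero : ∀ y ∈ F, w y * (c₀ - dot c y) = 0 := by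
      intro y hy
      have hsum : ∑ y ∈ F, w y * (c₀ - dot c y) = 0 := by
        simp only [mul_sub]
        rw [Finset.sum_sub_distrib, hdot, ← Finset.sum_mul, hw1, one_mul, sub_self]
      have hnn : ∀ y ∈ F, 0 ≤ w y * (c₀ - dot c y) := fun y hy =>
        mul_nonneg (hw0 y hy) (by linarith [h y hy])
      exact (Finset.sum_eq_zero_iff_of_nonneg hnn).1 hsum y hy
    rw [Finset.mem_convexHull']
    refine ⟨w, fun y hy => hw0 y (Finset.mem_of_mem_filter _ hy), ?_, ?_⟩
    · rw [Finset.sum_filter]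
      rw [← hw1]
      apply Finset.sum_congr rfl
      intro y hy
      by_cases hc : dot c y = c₀
      · simp [hc]
      · have := hzero y hy
        have : w y = 0 := by
          rcases mul_eq_zero.1 this with h' | h'
          · exact h'
          · exact absurd (by linarith [h y hy] : dot c y = c₀) hc
        simp [hc, this]
    · rw [Finset.sum_filter, ← hwx]
      apply Finset.sum_congr rfl
      intro y hy
      by_cases hc : dot c y = c₀
      · simp [hc]
      · have := hzero y hy
        have hw : w y = 0 := by
          rcases mul_eq_zero.1 this with h' | h'
          · exact h'
          · exact absurd (by linarith [h y hy] : dot c y = c₀) hc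
        simp [hc, hw]
  · intro x hx
    constructor
    · exact convexHull_mono (by exact_mod_cast Finset.filter_subset _ F) hx
    · have : convexHull ℝ ((F.filter (fun y => dot c y = c₀) : Finset (Fin d → ℝ)) : Set (Fin d → ℝ))
          ⊆ {x | dot c x = c₀} := by
        apply convexHull_min
        · intro y hy
          simp only [Finset.coe_filter, Set.mem_setOf_eq] at hy
          exact hy.2
        · exact convex_hyperplane (dot_isLinear c) c₀
      exact this hx

lemma exp_trans {F F' F'' : Finset (Fin d → ℝ)} (h1 : Exp F F') (h2 : Exp F' F'') :
    Exp F F'' := by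
  obtain ⟨f, c₀, hf, hF'⟩ := h1
  obtain ⟨g, c₁, hg, hF''⟩ := h2
  by_cases hne : (F.filter (fun y => dot f y < c₀)).Nonempty
  · set B := F.filter (fun y => dot f y < c₀) with hB
    set M : ℝ := max 0 ((B.image (fun y => (dot g y - c₁) / (c₀ - dot f y))).max' (by
      simpa using hne)) + 1 with hM
    have hMpos : 0 < M := by positivity
    have key : ∀ y ∈ F, dot f y < c₀ → M * (c₀ - dot f y) > dot g y - c₁ := by
      intro y hy hlt
      have hyB : y ∈ B := Finset.mem_filter.2 ⟨hy, hlt⟩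
      have hmem : (dot g y - c₁) / (c₀ - dot f y) ∈ B.image (fun y => (dot g y - c₁) / (c₀ - dot f y)) :=
        Finset.mem_image_of_mem _ hyB
      have hle : (dot g y - c₁) / (c₀ - dot f y) ≤ M - 1 := by
        have := Finset.le_max' _ _ hmem
        simp only [hM]
        have h2 : (dot g y - c₁) / (c₀ - dot f y) ≤ max 0 ((B.image (fun y => (dot g y - c₁) / (c₀ - dot f y))).max' (by simpa using hne)) := le_max_of_le_right this
        linarith
      have hpos : 0 < c₀ - dot f y := by linarith
      have := (div_le_iff₀ hpos).1 hle
      nlinarith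
    refine ⟨fun i => M * f i + g i, M * c₀ + c₁, ?_, ?_⟩
    · intro y hy
      have hdot : dot (fun i => M * f i + g i) y = M * dot f y + dot g y := by
        simp [dot, add_mul, Finset.sum_add_distrib, Finset.mul_sum, mul_assoc]
      rw [hdot]
      rcases lt_or_eq_of_le (hf y hy) with hlt | heq
      · have := key y hy hlt; nlinarith
      · have hyF' : y ∈ F' := hF' ▸ Finset.mem_filter.2 ⟨hy, heq⟩
        have := hg y hyF'
        nlinarith [heq]
    · rw [hF'']
      ext y
      simp only [Finset.mem_filter]
      have hdot : dot (fun i => M * f i + g i) y = M * dot f y + dot g y := by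
        simp [dot, add_mul, Finset.sum_add_distrib, Finset.mul_sum, mul_assoc]
      constructor
      · rintro ⟨hyF', hyg⟩
        have hymem := Finset.mem_filter.1 (hF' ▸ hyF' : y ∈ F.filter (fun y => dot f y = c₀))
        have hyF : y ∈ F := hymem.1
        have hyfeq : dot f y = c₀ := hymem.2
        exact ⟨hyF, by rw [hdot, hyfeq, hyg]⟩
      · rintro ⟨hyF, heq⟩
        rw [hdot] at heq
        rcases lt_or_eq_of_le (hf y hyF) with hlt | hfeq
        · exfalso; have := key y hyF hlt; nlinarith
        · have hyF' : y ∈ F' := hF' ▸ Finset.mem_filter.2 ⟨hyF, hfeq⟩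
          refine ⟨hyF', ?_⟩
          rw [← hfeq] at heq
          linarith
  · -- no strict points: F' = F
    have hFF' : F' = F := by
      rw [hF']
      apply Finset.filter_true_of_mem
      intro y hy
      by_contra hne'
      exact hne ⟨y, Finset.mem_filter.2 ⟨hy, lt_of_le_of_ne (hf y hy) hne'⟩⟩
    exact ⟨g, c₁, fun y hy => hg y (hFF' ▸ hy), by rw [hF'', hFF']⟩

lemma exp_mem_self {F F' : Finset (Fin d → ℝ)} {v : Fin d → ℝ} (h : Exp F {v}) : v ∈ F :=
  h.subset (Finset.mem_singleton_self v)

lemma exp_singleton_mono {F F' : Finset (Fin d → ℝ)} {v : Fin d → ℝ}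
    (hsub : F' ⊆ F) (h : Exp F {v}) (hv : v ∈ F') : Exp F' {v} := by
  obtain ⟨c, c₀, hle, hfil⟩ := h
  refine ⟨c, c₀, fun y hy => hle y (hsub hy), ?_⟩
  have hvF : v ∈ F.filter (fun y => dot c y = c₀) := hfil ▸ Finset.mem_singleton_self v
  have hvc : dot c v = c₀ := (Finset.mem_filter.1 hvF).2
  ext y
  simp only [Finset.mem_singleton, Finset.mem_filter]
  constructor
  · rintro rfl; exact ⟨hv, hvc⟩
  · rintro ⟨hyF', hyc⟩
    have : y ∈ F.filter (fun y => dot c y = c₀) := Finset.mem_filter.2 ⟨hsub hyF', hyc⟩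
    rw [← hfil] at this; exact Finset.mem_singleton.1 this


variable {F : Finset (Fin d → ℝ)} {P : Set (Fin d → ℝ)}

lemma isVertex_iff (hP : P = convexHull ℝ (F : Set (Fin d → ℝ))) {v : Fin d → ℝ} :
    IsVertexOf P v ↔ v ∈ F ∧ Exp F {v} := by
  constructor
  · rintro ⟨c, c₀, hle, hface⟩
    have hleF : ∀ y ∈ F, dot c y ≤ c₀ := fun y hy =>
      hle y (hP ▸ subset_convexHull ℝ (F : Set (Fin d → ℝ)) hy)
    have hfh := face_hull hleF
    have hsv : ({v} : Set (Fin d → ℝ)) =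
        convexHull ℝ ((F.filter (fun y => dot c y = c₀) : Finset (Fin d → ℝ)) : Set (Fin d → ℝ)) := by
      rw [← hfh, hface, hP]; rfl
    set F'' := F.filter (fun y => dot c y = c₀) with hF''
    have hsub : (F'' : Set (Fin d → ℝ)) ⊆ {v} :=
      (subset_convexHull ℝ _).trans hsv.symm.subset
    have hne : F''.Nonempty := by
      rcases F''.eq_empty_or_nonempty with h | h
      · exfalso
        rw [h] at hsv
        simp at hsv
      · exact h
    have hF''v : F'' = {v} := by
      obtain ⟨y, hy⟩ := hne
      have hyv : y = v := hsub hy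
      apply Finset.Subset.antisymm
      · intro z hz
        have := hsub hz
        simpa using this
      · intro z hz
        rw [Finset.mem_singleton] at hz
        subst hz; rwa [← hyv]
    have hvF'' : v ∈ F'' := hF''v ▸ Finset.mem_singleton_self v
    exact ⟨Finset.mem_of_mem_filter _ hvF'', ⟨c, c₀, hleF, hF''v.symm⟩⟩
  · rintro ⟨hvF, c, c₀, hle, hfil⟩
    refine ⟨c, c₀, fun x hx => dot_le_on_hull hle (hP ▸ hx), ?_⟩
    have := face_hull hle
    rw [← hfil] at this
    rw [hP]
    have h2 : {x ∈ convexHull ℝ (F : Set (Fin d → ℝ)) | dot c x = c₀} = {v} := by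
      rw [this]; simp
    have : ∀ x, (∑ i, c i * x i) = dot c x := fun _ => rfl
    rw [← h2]
    rfl

lemma isEdge_of_exp_pair (hP : P = convexHull ℝ (F : Set (Fin d → ℝ)))
    {u v : Fin d → ℝ} (huv : u ≠ v) (h : Exp F ({u, v} : Finset (Fin d → ℝ))) :
    IsEdgeOf P u v := by
  obtain ⟨c, c₀, hle, hfil⟩ := h
  refine ⟨huv, c, c₀, fun x hx => dot_le_on_hull hle (hP ▸ hx), ?_⟩
  have hfh := face_hull hle
  rw [← hfil] at hfh
  have hcoe : (({u, v} : Finset (Fin d → ℝ)) : Set (Fin d → ℝ)) = {u, v} := by simp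
  rw [hcoe] at hfh
  rw [convexHull_pair] at hfh
  rw [hP, ← hfh]
  rfl

lemma dot_add_smul (g ψ : Fin d → ℝ) (t : ℝ) (x : Fin d → ℝ) :
    dot (fun i => g i + t * ψ i) x = dot g x + t * dot ψ x := by
  simp [dot, add_mul, Finset.sum_add_distrib, Finset.mul_sum, mul_assoc]

def coordVec (σ : ℝ) (j : Fin d) : Fin d → ℝ := fun p => if p = j then σ else 0

lemma dot_coordVec (σ : ℝ) (j : Fin d) (x : Fin d → ℝ) :
    dot (coordVec σ j) x = σ * x j := by
  simp [dot, coordVec, ite_mul, zero_mul]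

lemma pow_inj : ∀ {d : ℕ} (x y : Fin d → ℝ), (∀ i, x i = 0 ∨ x i = 1) →
    (∀ i, y i = 0 ∨ y i = 1) →
    ∑ j : Fin d, (2:ℝ)^(j:ℕ) * x j = ∑ j : Fin d, (2:ℝ)^(j:ℕ) * y j → x = y := by
  intro d
  induction d with
  | zero => intro x y _ _ _; funext i; exact absurd i.2 (by omega)
  | succ n ih =>
    intro x y hx hy hsum
    have hbound : ∀ (z : Fin (n+1) → ℝ), (∀ i, z i = 0 ∨ z i = 1) →
        0 ≤ ∑ j : Fin n, (2:ℝ)^(j:ℕ) * z j.castSucc ∧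
        ∑ j : Fin n, (2:ℝ)^(j:ℕ) * z j.castSucc ≤ 2^n - 1 := by
      intro z hz
      constructor
      · apply Finset.sum_nonneg
        intro j _
        rcases hz j.castSucc with h | h <;> rw [h] <;> positivity
      · have h1 : ∑ j : Fin n, (2:ℝ)^(j:ℕ) * z j.castSucc ≤ ∑ j : Fin n, (2:ℝ)^(j:ℕ) := by
          apply Finset.sum_le_sum
          intro j _
          rcases hz j.castSucc with h | h <;> rw [h] <;> nlinarith [pow_pos (by norm_num : (0:ℝ) < 2) (j:ℕ)]
        have h2 : ∑ j : Fin n, (2:ℝ)^(j:ℕ) = 2^n - 1 := by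
          rw [Fin.sum_univ_eq_sum_range (fun i => (2:ℝ)^i)]
          rw [geom_sum_eq (by norm_num : (2:ℝ) ≠ 1) n]
          norm_num
        linarith
    rw [Fin.sum_univ_castSucc, Fin.sum_univ_castSucc] at hsum
    simp only [Fin.coe_castSucc, Fin.val_last] at hsum
    obtain ⟨hA0, hA1⟩ := hbound x hx
    obtain ⟨hB0, hB1⟩ := hbound y hy
    have hlast : x (Fin.last n) = y (Fin.last n) := by
      rcases hx (Fin.last n) with h1 | h1 <;> rcases hy (Fin.last n) with h2 | h2 <;>
        rw [h1, h2] <;> rw [h1, h2] at hsum <;> first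
          | rfl
          | (exfalso; nlinarith [pow_pos (by norm_num : (0:ℝ) < 2) n])
    have hA : ∑ j : Fin n, (2:ℝ)^(j:ℕ) * x j.castSucc = ∑ j : Fin n, (2:ℝ)^(j:ℕ) * y j.castSucc := by
      rw [hlast] at hsum
      linarith
    have := ih (fun j => x j.castSucc) (fun j => y j.castSucc)
      (fun j => hx j.castSucc) (fun j => hy j.castSucc) hA
    funext i
    induction i using Fin.lastCases with
    | last => exact hlast
    | cast j => exact congrFun this j
def φvec : Fin d → ℝ := fun j => (2:ℝ)^(j:ℕ)

lemma dot_φvec (x : Fin d → ℝ) : dot φvec x = ∑ j : Fin d, (2:ℝ)^(j:ℕ) * x j := rfl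

lemma φ_inj {x y : Fin d → ℝ} (hx : ∀ i, x i = 0 ∨ x i = 1) (hy : ∀ i, y i = 0 ∨ y i = 1)
    (h : dot φvec x = dot φvec y) : x = y :=
  pow_inj x y hx hy h

/-- Build an exposed subset in direction ψ starting from the vertex v. -/
lemma build_face {F' : Finset (Fin d → ℝ)} {g : Fin d → ℝ} {c₀ : ℝ} {v : Fin d → ℝ}
    (hle : ∀ y ∈ F', dot g y ≤ c₀)
    (hfil : ({v} : Finset (Fin d → ℝ)) = F'.filter (fun y => dot g y = c₀))
    (ψ : Fin d → ℝ) (hY : (F'.filter (fun y => dot ψ v < dot ψ y)).Nonempty) :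
    ∃ t : ℝ, 0 < t ∧
      Exp F' (F'.filter (fun y => dot g y + t * dot ψ y = c₀ + t * dot ψ v)) ∧
      v ∈ F'.filter (fun y => dot g y + t * dot ψ y = c₀ + t * dot ψ v) ∧
      Exp (F'.filter (fun y => dot g y + t * dot ψ y = c₀ + t * dot ψ v)) {v} ∧
      (∃ y ∈ F'.filter (fun y => dot g y + t * dot ψ y = c₀ + t * dot ψ v), y ≠ v) ∧
      (∀ y ∈ F'.filter (fun y => dot g y + t * dot ψ y = c₀ + t * dot ψ v),
        y ≠ v → dot ψ v < dot ψ y) := by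
  have hvF : v ∈ F' := by
    have : v ∈ F'.filter (fun y => dot g y = c₀) := hfil ▸ Finset.mem_singleton_self v
    exact Finset.mem_of_mem_filter _ this
  have hgv : dot g v = c₀ := by
    have : v ∈ F'.filter (fun y => dot g y = c₀) := hfil ▸ Finset.mem_singleton_self v
    exact (Finset.mem_filter.1 this).2
  have hstrict : ∀ y ∈ F', y ≠ v → dot g y < c₀ := by
    intro y hy hne
    rcases lt_or_eq_of_le (hle y hy) with h | h
    · exact h
    · exfalso
      have : y ∈ F'.filter (fun y => dot g y = c₀) := Finset.mem_filter.2 ⟨hy, h⟩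
      rw [← hfil, Finset.mem_singleton] at this
      exact hne this
  set Y := F'.filter (fun y => dot ψ v < dot ψ y) with hYdef
  set t := Y.inf' hY (fun y => (c₀ - dot g y) / (dot ψ y - dot ψ v)) with ht
  have htpos : 0 < t := by
    rw [ht]
    rw [Finset.lt_inf'_iff]
    intro y hy
    obtain ⟨hyF, hyψ⟩ := Finset.mem_filter.1 hy
    have hyv : y ≠ v := by rintro rfl; exact lt_irrefl _ hyψ
    exact div_pos (by linarith [hstrict y hyF hyv]) (by linarith)
  have hbound : ∀ y ∈ F', dot g y + t * dot ψ y ≤ c₀ + t * dot ψ v := by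
    intro y hy
    by_cases hψ : dot ψ v < dot ψ y
    · have hyY : y ∈ Y := Finset.mem_filter.2 ⟨hy, hψ⟩
      have := Finset.inf'_le (fun y => (c₀ - dot g y) / (dot ψ y - dot ψ v)) hyY
      rw [← ht] at this
      have h2 : t * (dot ψ y - dot ψ v) ≤ c₀ - dot g y := by
        rw [div_eq_inv_mul] at this
        have hpos : 0 < dot ψ y - dot ψ v := by linarith
        calc t * (dot ψ y - dot ψ v) ≤ (dot ψ y - dot ψ v)⁻¹ * (c₀ - dot g y) * (dot ψ y - dot ψ v) := by
              apply mul_le_mul_of_nonneg_right this (le_of_lt hpos)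
          _ = c₀ - dot g y := by field_simp
      linarith
    · push_neg at hψ
      have := hle y hy
      nlinarith
  set E := F'.filter (fun y => dot g y + t * dot ψ y = c₀ + t * dot ψ v) with hE
  have hvE : v ∈ E := Finset.mem_filter.2 ⟨hvF, by rw [hgv]⟩
  have hEexp : Exp F' E := by
    refine ⟨fun i => g i + t * ψ i, c₀ + t * dot ψ v, ?_, ?_⟩
    · intro y hy; rw [dot_add_smul]; exact hbound y hy
    · rw [hE]
      apply Finset.filter_congr
      intro y _
      simp [dot_add_smul]
  have hstrict2 : ∀ y ∈ E, y ≠ v → dot ψ v < dot ψ y := by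
    intro y hyE hyv
    obtain ⟨hyF, hyeq⟩ := Finset.mem_filter.1 hyE
    by_contra hψ
    push_neg at hψ
    have h1 : dot g y < c₀ := hstrict y hyF hyv
    nlinarith
  have hEv : Exp E {v} := by
    refine ⟨g, c₀, fun y hy => hle y (Finset.mem_of_mem_filter _ hy), ?_⟩
    ext z
    simp only [Finset.mem_singleton, Finset.mem_filter]
    constructor
    · rintro rfl; exact ⟨hvE, hgv⟩
    · rintro ⟨hzE, hzg⟩
      by_contra hne
      exact absurd hzg (ne_of_lt (hstrict z (Finset.mem_of_mem_filter _ hzE) hne))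
  have hwit : ∃ y ∈ E, y ≠ v := by
    obtain ⟨y₁, hy₁⟩ := Finset.exists_mem_eq_inf' hY (fun y => (c₀ - dot g y) / (dot ψ y - dot ψ v))
    obtain ⟨hy₁Y, heq⟩ := hy₁
    obtain ⟨hy₁F, hy₁ψ⟩ := Finset.mem_filter.1 hy₁Y
    have hy₁v : y₁ ≠ v := by rintro rfl; exact lt_irrefl _ hy₁ψ
    refine ⟨y₁, Finset.mem_filter.2 ⟨hy₁F, ?_⟩, hy₁v⟩
    have hpos : 0 < dot ψ y₁ - dot ψ v := by linarith
    have : t = (c₀ - dot g y₁) / (dot ψ y₁ - dot ψ v) := by rw [ht, ← heq]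
    rw [this]; field_simp; ring
  exact ⟨t, htpos, hEexp, hvE, hEv, hwit, hstrict2⟩

/-- Every vertex of a 0/1 polytope with another generator admits an edge. -/
lemma edge_exists : ∀ (n : ℕ) (F' : Finset (Fin d → ℝ)), F'.card ≤ n →
    (∀ y ∈ F', ∀ i, y i = 0 ∨ y i = 1) → ∀ (v : Fin d → ℝ), Exp F' {v} →
    (∃ z ∈ F', z ≠ v) → ∃ u, u ≠ v ∧ Exp F' {v, u} := by
  intro n
  induction n with
  | zero =>
    intro F' hcard _ v hv _
    exfalso
    have hvF : v ∈ F' := hv.subset (Finset.mem_singleton_self v)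
    have := Finset.card_pos.2 ⟨v, hvF⟩
    omega
  | succ n ih =>
    intro F' hcard h01 v hv hz
    have hvF : v ∈ F' := hv.subset (Finset.mem_singleton_self v)
    obtain ⟨z, hzF, hzv⟩ := hz
    by_cases hsmall : F'.card ≤ 2
    · -- F' = {v, z}
      have hsub : ({v, z} : Finset (Fin d → ℝ)) ⊆ F' := by
        intro y hy
        rcases Finset.mem_insert.1 hy with rfl | hy
        · exact hvF
        · rw [Finset.mem_singleton] at hy; subst hy; exact hzF
      have hc2 : ({v, z} : Finset (Fin d → ℝ)).card = 2 := Finset.card_pair (Ne.symm hzv)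
      have hFeq : F' = {v, z} := (Finset.eq_of_subset_of_card_le hsub (by omega)).symm
      exact ⟨z, hzv, by rw [hFeq]; exact exp_refl _⟩
    · push_neg at hsmall
      obtain ⟨g, c₀, hle, hfil⟩ := hv
      -- find a coordinate direction giving a proper exposed subset
      by_cases hgood : ∃ E : Finset (Fin d → ℝ), Exp F' E ∧ E ⊂ F' ∧ v ∈ E ∧ Exp E {v} ∧
          ∃ y ∈ E, y ≠ v
      · obtain ⟨E, hEexp, hEss, hvE, hEv, y, hyE, hyv⟩ := hgood
        have hcard' : E.card ≤ n := by
          have := Finset.card_lt_card hEss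
          omega
        obtain ⟨u, huv, hpair⟩ := ih E hcard' (fun y hy i => h01 y (hEss.subset hy) i) v hEv ⟨y, hyE, hyv⟩
        exact ⟨u, huv, exp_trans hEexp hpair⟩
      · exfalso
        push_neg at hgood
        -- every coordinate is affine in (dot g)
        have haffine : ∀ j : Fin d, ∃ β : ℝ, ∀ y ∈ F', y j = v j + β * (c₀ - dot g y) := by
          intro j
          by_cases hconst : ∀ y ∈ F', y j = v j
          · exact ⟨0, fun y hy => by rw [hconst y hy]; ring⟩
          · push_neg at hconst
            obtain ⟨y₀, hy₀F, hy₀j⟩ := hconst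
            set σ : ℝ := if v j = 0 then 1 else -1 with hσ
            have hσne : σ ≠ 0 := by rw [hσ]; split <;> norm_num
            set ψ := coordVec σ j with hψ
            have hψv : ∀ x, dot ψ x = σ * x j := fun x => dot_coordVec σ j x
            have hY : (F'.filter (fun y => dot ψ v < dot ψ y)).Nonempty := by
              refine ⟨y₀, Finset.mem_filter.2 ⟨hy₀F, ?_⟩⟩
              rw [hψv, hψv]
              rcases h01 v hvF j with hv0 | hv1
              · rcases h01 y₀ hy₀F j with h | h
                · exact absurd (h.trans hv0.symm) hy₀j
                · rw [hσ, if_pos hv0, hv0, h]; norm_num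
              · rcases h01 y₀ hy₀F j with h | h
                · rw [hσ, if_neg (by rw [hv1]; norm_num), hv1, h]; norm_num
                · exact absurd (h.trans hv1.symm) hy₀j
            obtain ⟨t, htpos, hEexp, hvE, hEv, hwit, _⟩ := build_face hle hfil ψ hY
            set E := F'.filter (fun y => dot g y + t * dot ψ y = c₀ + t * dot ψ v) with hE
            have hEF : E = F' := by
              by_contra hne
              obtain ⟨y', hy'E, hy'v⟩ := hwit
              exact hy'v (hgood E hEexp (lt_of_le_of_ne (Finset.filter_subset _ _) hne) hvE hEv y' hy'E)
            refine ⟨1 / (σ * t), ?_⟩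
            intro y hy
            have : y ∈ E := hEF.symm ▸ hy
            have heq := (Finset.mem_filter.1 this).2
            rw [hψv, hψv] at heq
            have hst : σ * t ≠ 0 := mul_ne_zero hσne (ne_of_gt htpos)
            field_simp
            nlinarith [heq]
        choose β hβ using haffine
        -- three distinct points
        obtain ⟨y₁, y₂, y₃, hy₁, hy₂, hy₃, h12, h13, h23⟩ := Finset.two_lt_card_iff.1 hsmall
        have hginj : ∀ a b, a ∈ F' → b ∈ F' → dot g a = dot g b → a = b := by
          intro a b ha hb hg
          funext j
          rw [hβ j a ha, hβ j b hb, hg]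
        have hG12 : dot g y₁ ≠ dot g y₂ := fun h => h12 (hginj y₁ y₂ hy₁ hy₂ h)
        have hG13 : dot g y₁ ≠ dot g y₃ := fun h => h13 (hginj y₁ y₃ hy₁ hy₃ h)
        have hG23 : dot g y₂ ≠ dot g y₃ := fun h => h23 (hginj y₂ y₃ hy₂ hy₃ h)
        set G₁ := dot g y₁
        set G₂ := dot g y₂
        set G₃ := dot g y₃
        set tt := (G₂ - G₁) / (G₃ - G₁) with htt
        have hden : G₃ - G₁ ≠ 0 := fun h' => hG13 (by linarith [sub_eq_zero.1 h'])
        have hmid : ∀ j, y₂ j = y₁ j + tt * (y₃ j - y₁ j) := by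
          intro j
          have e1 := hβ j y₁ hy₁
          have e2 := hβ j y₂ hy₂
          have e3 := hβ j y₃ hy₃
          rw [e1, e2, e3, htt]
          field_simp
          ring
        obtain ⟨j₀, hj₀⟩ := Function.ne_iff.1 h13
        have h2j := hmid j₀
        have htt0 : tt ≠ 0 := by
          rw [htt]
          intro h
          rcases div_eq_zero_iff.1 h with h' | h'
          · exact hG12 (by linarith)
          · exact hden h'
        have htt1 : tt ≠ 1 := by
          rw [htt]
          intro h
          rw [div_eq_one_iff_eq hden] at h
          exact hG23 (by linarith)
        rcases h01 y₁ hy₁ j₀ with ha | ha <;> rcases h01 y₃ hy₃ j₀ with hb | hb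
        · exact hj₀ (ha.trans hb.symm)
        · rw [ha, hb] at h2j
          simp at h2j
          rcases h01 y₂ hy₂ j₀ with hc | hc <;> rw [hc] at h2j
          · exact htt0 h2j.symm
          · exact htt1 h2j.symm
        · rw [ha, hb] at h2j
          rcases h01 y₂ hy₂ j₀ with hc | hc <;> rw [hc] at h2j
          · exact htt1 (by linarith)
          · exact htt0 (by linarith)
        · exact hj₀ (ha.trans hb.symm)

lemma improving_edge {F' : Finset (Fin d → ℝ)}
    (h01 : ∀ y ∈ F', ∀ i, y i = 0 ∨ y i = 1) {v : Fin d → ℝ} (hv : Exp F' {v})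
    (ψ : Fin d → ℝ) (hY : (F'.filter (fun y => dot ψ v < dot ψ y)).Nonempty) :
    ∃ u, u ≠ v ∧ Exp F' {v, u} ∧ dot ψ v < dot ψ u := by
  obtain ⟨g, c₀, hle, hfil⟩ := hv
  obtain ⟨t, _, hEexp, hvE, hEv, hwit, hstrict⟩ := build_face hle hfil ψ hY
  set E := F'.filter (fun y => dot g y + t * dot ψ y = c₀ + t * dot ψ v) with hE
  obtain ⟨u, huv, hpair⟩ := edge_exists E.card E le_rfl
    (fun y hy i => h01 y (Finset.mem_of_mem_filter _ hy) i) v hEv hwit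
  have huE : u ∈ E := hpair.subset (by simp)
  exact ⟨u, huv, exp_trans hEexp hpair, hstrict u huE huv⟩

lemma exp_pair_right {F' : Finset (Fin d → ℝ)} {b u : Fin d → ℝ} (ψ : Fin d → ℝ)
    (h : Exp F' {b, u}) (hlt : dot ψ b < dot ψ u) : Exp F' {u} := by
  refine exp_trans h ⟨ψ, dot ψ u, ?_, ?_⟩
  · intro y hy
    rcases Finset.mem_insert.1 hy with rfl | hy
    · exact le_of_lt hlt
    · rw [Finset.mem_singleton] at hy; subst hy; exact le_rfl
  · ext z
    simp only [Finset.mem_singleton, Finset.mem_filter, Finset.mem_insert]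
    constructor
    · rintro rfl; exact ⟨Or.inr rfl, rfl⟩
    · rintro ⟨hz, hzψ⟩
      rcases hz with rfl | rfl
      · exact absurd hzψ (ne_of_lt hlt)
      · rfl

/-- the φ-argmax of a nonempty 0/1 set is a vertex -/
lemma argmax_vertex {F' : Finset (Fin d → ℝ)} (hne : F'.Nonempty)
    (h01 : ∀ y ∈ F', ∀ i, y i = 0 ∨ y i = 1) :
    ∃ ystar ∈ F', Exp F' {ystar} ∧ ∀ y ∈ F', dot φvec y ≤ dot φvec ystar := by
  obtain ⟨ystar, hyF, hymax⟩ := Finset.exists_mem_eq_sup' hne (dot (φvec : Fin d → ℝ))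
  refine ⟨ystar, hyF, ⟨φvec, dot φvec ystar, ?_, ?_⟩, ?_⟩
  · intro y hy; rw [← hymax]; exact Finset.le_sup' _ hy
  · ext z
    simp only [Finset.mem_singleton, Finset.mem_filter]
    constructor
    · rintro rfl; exact ⟨hyF, rfl⟩
    · rintro ⟨hzF, hz⟩
      exact φ_inj (h01 z hzF) (h01 ystar hyF) hz
  · intro y hy; rw [← hymax]; exact Finset.le_sup' _ hy

lemma crossing_aux {F' : Finset (Fin d → ℝ)}
    (h01 : ∀ y ∈ F', ∀ i, y i = 0 ∨ y i = 1) (A B : Finset (Fin d → ℝ))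
    (hB : B.Nonempty) (hdisj : ∀ y, y ∈ A → y ∈ B → False)
    (hvert : ∀ y, Exp F' {y} ↔ y ∈ A ∪ B)
    {ystar : Fin d → ℝ} (hyF : ystar ∈ F') (hyv : Exp F' {ystar})
    (hymax : ∀ y ∈ F', dot φvec y ≤ dot φvec ystar) (hyA : ystar ∈ A) :
    ∃ a ∈ A, ∃ b ∈ B, Exp F' ({a, b} : Finset (Fin d → ℝ)) := by
  obtain ⟨b, hbB, hbmax⟩ := Finset.exists_mem_eq_sup' hB (dot (φvec : Fin d → ℝ))
  have hbv : Exp F' {b} := (hvert b).2 (Finset.mem_union_right _ hbB)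
  have hbF : b ∈ F' := hbv.subset (Finset.mem_singleton_self b)
  have hbne : b ≠ ystar := fun h => hdisj ystar hyA (h ▸ hbB)
  have hblt : dot φvec b < dot φvec ystar := by
    rcases lt_or_eq_of_le (hymax b hbF) with h | h
    · exact h
    · exact absurd (φ_inj (h01 b hbF) (h01 ystar hyF) h) hbne
  have hY : (F'.filter (fun y => dot φvec b < dot φvec y)).Nonempty :=
    ⟨ystar, Finset.mem_filter.2 ⟨hyF, hblt⟩⟩
  obtain ⟨u, hub, hpair, hult⟩ := improving_edge h01 hbv φvec hY
  have huv : Exp F' {u} := exp_pair_right φvec hpair hult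
  have huAB : u ∈ A ∪ B := (hvert u).1 huv
  have huA : u ∈ A := by
    rcases Finset.mem_union.1 huAB with h | h
    · exact h
    · exfalso
      have h2 := Finset.le_sup' (dot (φvec : Fin d → ℝ)) h
      rw [hbmax] at h2
      exact absurd hult (not_lt.2 h2)
  exact ⟨u, huA, b, hbB, by rwa [Finset.pair_comm]⟩

lemma crossing {F' : Finset (Fin d → ℝ)}
    (h01 : ∀ y ∈ F', ∀ i, y i = 0 ∨ y i = 1) (A B : Finset (Fin d → ℝ))
    (hA : A.Nonempty) (hB : B.Nonempty) (hdisj : ∀ y, y ∈ A → y ∈ B → False)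
    (hvert : ∀ y, Exp F' {y} ↔ y ∈ A ∪ B) :
    ∃ a ∈ A, ∃ b ∈ B, Exp F' ({a, b} : Finset (Fin d → ℝ)) := by
  have hne : F'.Nonempty := by
    obtain ⟨a, ha⟩ := hA
    exact ⟨a, ((hvert a).2 (Finset.mem_union_left _ ha)).subset (Finset.mem_singleton_self a)⟩
  obtain ⟨ystar, hyF, hyv, hymax⟩ := argmax_vertex hne h01
  rcases Finset.mem_union.1 ((hvert ystar).1 hyv) with hyA | hyB
  · exact crossing_aux h01 A B hB hdisj hvert hyF hyv hymax hyA
  · obtain ⟨b', hb'B, a', ha'A, hexp⟩ := crossing_aux h01 B A hA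
      (fun y hy hy' => hdisj y hy' hy)
      (fun y => (hvert y).trans (by rw [Finset.union_comm])) hyF hyv hymax hyB
    exact ⟨a', ha'A, b', hb'B, by rwa [Finset.pair_comm]⟩

lemma fin2_cases (a : Fin 2) : a = 0 ∨ a = 1 := by omega

lemma cast_fin2_zero : (((0 : Fin 2) : ℕ) : ℝ) = 0 := by norm_num
lemma cast_fin2_one : (((1 : Fin 2) : ℕ) : ℝ) = 1 := by norm_num

/-- The set of generators matching `w` on the `ι`-coordinates in `I` is exposed. -/
lemma exp_coordFace {F : Finset (Fin d → ℝ)} (hF : ∀ x ∈ F, ∀ i, x i = 0 ∨ x i = 1)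
    {k : ℕ} (ι : Fin k → Fin d) (I : Finset (Fin k)) (w : Fin k → Fin 2) :
    Exp F (F.filter (fun y => ∀ i ∈ I, y (ι i) = ((w i : ℕ) : ℝ))) := by
  set σ : Fin k → ℝ := fun i => if w i = 1 then 1 else -1 with hσ
  set bnd : Fin k → ℝ := fun i => if w i = 1 then 1 else 0 with hbnd
  set cv : Fin d → ℝ := fun p => ∑ i ∈ I, (if ι i = p then σ i else 0) with hcv
  have hdot : ∀ y : Fin d → ℝ, dot cv y = ∑ i ∈ I, σ i * y (ι i) := by
    intro y
    simp only [dot, hcv, Finset.sum_mul, ite_mul, zero_mul]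
    rw [Finset.sum_comm]
    refine Finset.sum_congr rfl fun i _ => ?_
    rw [Finset.sum_ite_eq Finset.univ (ι i) (fun p => σ i * y p)]
    simp
  have hterm : ∀ y ∈ F, ∀ i ∈ I, σ i * y (ι i) ≤ bnd i ∧
      (σ i * y (ι i) = bnd i ↔ y (ι i) = ((w i : ℕ) : ℝ)) := by
    intro y hy i _
    rcases fin2_cases (w i) with hw | hw <;> rcases hF y hy (ι i) with hyi | hyi <;>
      simp [hσ, hbnd, hw, hyi, cast_fin2_zero, cast_fin2_one] <;> norm_num
  refine ⟨cv, ∑ i ∈ I, bnd i, ?_, ?_⟩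
  · intro y hy
    rw [hdot]
    exact Finset.sum_le_sum (fun i hi => (hterm y hy i hi).1)
  · ext y
    simp only [Finset.mem_filter]
    constructor
    · rintro ⟨hyF, hmatch⟩
      refine ⟨hyF, ?_⟩
      rw [hdot]
      exact Finset.sum_congr rfl fun i hi => (hterm y hyF i hi).2.2 (hmatch i hi)
    · rintro ⟨hyF, heq⟩
      refine ⟨hyF, ?_⟩
      rw [hdot] at heq
      have := (Finset.sum_eq_sum_iff_of_le (fun i hi => (hterm y hyF i hi).1)).1 heq
      intro i hi
      exact (hterm y hyF i hi).2.1 (this i hi)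

lemma cube_card_univ (k : ℕ) : (Finset.univ : Finset (Fin k → Fin 2)).card = 2 ^ k := by
  rw [Finset.card_univ, Fintype.card_fun]
  simp

lemma cube_exp_nonneg (k : ℕ) : 0 ≤ cubeVertexExpansion k := by
  apply Real.sInf_nonneg
  rintro r ⟨S, hS, hc, rfl⟩
  positivity

lemma cube_exp_set_bddBelow (k : ℕ) :
    BddBelow {r : ℝ | ∃ S : Finset (Fin k → Fin 2), S.Nonempty ∧ 2 * S.card ≤ 2 ^ k ∧
      r = ((cubeNbhd S).card : ℝ) / (S.card : ℝ)} := by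
  refine ⟨0, ?_⟩
  rintro r ⟨S, hS, hc, rfl⟩
  positivity

lemma cube_exp_mul_le {k : ℕ} (B : Finset (Fin k → Fin 2)) (hB : B.Nonempty)
    (hc : 2 * B.card ≤ 2 ^ k) :
    cubeVertexExpansion k * B.card ≤ ((cubeNbhd B).card : ℝ) := by
  have hmem : ((cubeNbhd B).card : ℝ) / (B.card : ℝ) ∈
      {r : ℝ | ∃ S : Finset (Fin k → Fin 2), S.Nonempty ∧ 2 * S.card ≤ 2 ^ k ∧
        r = ((cubeNbhd S).card : ℝ) / (S.card : ℝ)} := ⟨B, hB, hc, rfl⟩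
  have hle := csInf_le (cube_exp_set_bddBelow k) hmem
  have hpos : (0:ℝ) < (B.card : ℝ) := by
    have := Finset.card_pos.2 hB
    exact_mod_cast this
  calc cubeVertexExpansion k * B.card
      ≤ (((cubeNbhd B).card : ℝ) / (B.card : ℝ)) * B.card :=
        mul_le_mul_of_nonneg_right hle (le_of_lt hpos)
    _ = ((cubeNbhd B).card : ℝ) := by field_simp

lemma cube_exp_zero : cubeVertexExpansion 0 = 0 := by
  unfold cubeVertexExpansion
  convert Real.sInf_empty using 2
  ext r
  simp only [Set.mem_setOf_eq, Set.mem_empty_iff_false, iff_false]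
  rintro ⟨S, hS, hc, _⟩
  have := Finset.card_pos.2 hS
  simp at hc
  omega

lemma cube_exp_le_one {k : ℕ} (hk : 0 < k) : cubeVertexExpansion k ≤ 1 := by
  set i₀ : Fin k := ⟨0, hk⟩ with hi₀
  set S₀ : Finset (Fin k → Fin 2) := Finset.univ.filter (fun w => w i₀ = 0) with hS₀
  set S₁ : Finset (Fin k → Fin 2) := Finset.univ.filter (fun w => w i₀ = 1) with hS₁
  have hS₀ne : S₀.Nonempty := ⟨fun _ => 0, by simp [hS₀]⟩
  have hcards : S₀.card = S₁.card := by
    apply Finset.card_bij' (fun w _ => Function.update w i₀ 1) (fun w _ => Function.update w i₀ 0)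
    case hi =>
      intro a ha
      rw [hS₁, Finset.mem_filter]
      exact ⟨Finset.mem_univ _, Function.update_self _ _ _⟩
    case hj =>
      intro a ha
      rw [hS₀, Finset.mem_filter]
      exact ⟨Finset.mem_univ _, Function.update_self _ _ _⟩
    case left_inv =>
      intro a ha
      rw [hS₀, Finset.mem_filter] at ha
      funext p
      by_cases hp : p = i₀
      · subst hp; simp [Function.update_self, ha.2]
      · simp [Function.update_of_ne hp]
    case right_inv =>
      intro a ha
      rw [hS₁, Finset.mem_filter] at ha
      funext p
      by_cases hp : p = i₀
      · subst hp; simp [Function.update_self, ha.2]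
      · simp [Function.update_of_ne hp]
  have hsplit : S₀.card + S₁.card = 2 ^ k := by
    have := Finset.card_filter_add_card_filter_not
      (s := (Finset.univ : Finset (Fin k → Fin 2))) (p := fun w => w i₀ = 0)
    rw [cube_card_univ] at this
    have hneg : Finset.univ.filter (fun w : Fin k → Fin 2 => ¬ (w i₀ = 0)) = S₁ := by
      rw [hS₁]
      ext w
      simp only [Finset.mem_filter, Finset.mem_univ, true_and]
      rcases fin2_cases (w i₀) with h | h <;> simp [h]
    rw [hneg] at this
    exact this
  have hnb : cubeNbhd S₀ ⊆ S₁ := by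
    intro w hw
    rw [cubeNbhd, Finset.mem_filter] at hw
    obtain ⟨_, hwS₀, _⟩ := hw
    rw [hS₁, Finset.mem_filter]
    refine ⟨Finset.mem_univ _, ?_⟩
    have : ¬ (w i₀ = 0) := fun h => hwS₀ (by rw [hS₀, Finset.mem_filter]; exact ⟨Finset.mem_univ _, h⟩)
    omega
  have hmem : ((cubeNbhd S₀).card : ℝ) / (S₀.card : ℝ) ∈
      {r : ℝ | ∃ S : Finset (Fin k → Fin 2), S.Nonempty ∧ 2 * S.card ≤ 2 ^ k ∧
        r = ((cubeNbhd S).card : ℝ) / (S.card : ℝ)} :=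
    ⟨S₀, hS₀ne, by omega, rfl⟩
  have hle := csInf_le (cube_exp_set_bddBelow k) hmem
  have hpos : (0:ℝ) < (S₀.card : ℝ) := by
    have := Finset.card_pos.2 hS₀ne
    exact_mod_cast this
  have hratio : ((cubeNbhd S₀).card : ℝ) / (S₀.card : ℝ) ≤ 1 := by
    rw [div_le_one hpos]
    have := Finset.card_le_card hnb
    calc ((cubeNbhd S₀).card : ℝ) ≤ (S₁.card : ℝ) := by exact_mod_cast this
      _ = (S₀.card : ℝ) := by exact_mod_cast hcards.symm
  exact hle.trans hratio

lemma fin2_cast_inj {a b : Fin 2} (h : ((a : ℕ) : ℝ) = ((b : ℕ) : ℝ)) : a = b := by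
  have : (a : ℕ) = (b : ℕ) := Nat.cast_injective h
  omega

end PLV

set_option maxHeartbeats 4000000 in
open PLV in
/-- Projection lemma, vertex-expansion version: if `P ⊂ ℝ^d` is a 0/1 polytope and
the projection onto `k` coordinates (given by an injection `ι`) is surjective onto
`{0,1}^k` on vertices, with every fiber containing at most `c` vertices of `P`, then
the vertex expansion of the graph of `P` is at least `h_k/(2c)`, where `h_k` is the
vertex expansion of the `k`-cube graph. -/
theorem projection_lemma_vertex
    (d k c : ℕ) (F : Finset (Fin d → ℝ)) (hF : ∀ x ∈ F, ∀ i, x i = 0 ∨ x i = 1)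
    (P : Set (Fin d → ℝ)) (hP : P = convexHull ℝ (F : Set (Fin d → ℝ)))
    (ι : Fin k → Fin d) (hι : Function.Injective ι)
    (hsurj : ∀ w : Fin k → Fin 2, ∃ v, IsVertexOf P v ∧ ∀ i, v (ι i) = ((w i : ℕ) : ℝ))
    (hfiber : ∀ w : Fin k → Fin 2,
      {v | IsVertexOf P v ∧ ∀ i, v (ι i) = ((w i : ℕ) : ℝ)}.ncard ≤ c) :
    VertexExpansionAtLeast P (cubeVertexExpansion k / (2 * c)) := by
  intro S hS hSne hScard
  classical
  rcases Nat.eq_zero_or_pos c with hc0 | hcpos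
  · subst hc0
    rw [Nat.cast_zero, mul_zero, div_zero, zero_mul]
    exact Nat.cast_nonneg _
  rcases Nat.eq_zero_or_pos k with hk0 | hkpos
  · subst hk0
    rw [cube_exp_zero, zero_div, zero_mul]
    exact Nat.cast_nonneg _
  -- Finset versions of the vertex set, S, and the neighborhood
  set Vf : Finset (Fin d → ℝ) := F.filter (fun v => Exp F {v}) with hVfdef
  have hvert : ∀ v, IsVertexOf P v ↔ v ∈ Vf := by
    intro v
    rw [isVertex_iff hP, hVfdef, Finset.mem_filter]
  have hpolyVf : polyVerts P = ↑Vf := by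
    ext v; exact (hvert v).trans (Finset.mem_coe).symm
  set Sf : Finset (Fin d → ℝ) := Vf.filter (fun v => v ∈ S) with hSfdef
  have hSfS : ↑Sf = S := by
    ext v
    rw [hSfdef]
    simp only [Finset.coe_filter, Set.mem_setOf_eq]
    constructor
    · rintro ⟨_, h⟩; exact h
    · intro h; exact ⟨(hvert v).1 (hS h), h⟩
  set Nf : Finset (Fin d → ℝ) := Vf.filter (fun v => v ∈ polyNbhd P S) with hNfdef
  have hNfN : ↑Nf = polyNbhd P S := by
    ext v
    rw [hNfdef]
    simp only [Finset.coe_filter, Set.mem_setOf_eq]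
    constructor
    · rintro ⟨_, h⟩; exact h
    · intro h; exact ⟨(hvert v).1 h.1, h⟩
  -- fibers
  set fib : (Fin k → Fin 2) → Finset (Fin d → ℝ) :=
    fun w => Vf.filter (fun v => ∀ i, v (ι i) = ((w i : ℕ) : ℝ)) with hfibdef
  have hfib_ne : ∀ w, (fib w).Nonempty := by
    intro w
    obtain ⟨v, hv, hco⟩ := hsurj w
    exact ⟨v, Finset.mem_filter.2 ⟨(hvert v).1 hv, hco⟩⟩
  have hfib_card : ∀ w, (fib w).card ≤ c := by
    intro w
    have hset : {v | IsVertexOf P v ∧ ∀ i, v (ι i) = ((w i : ℕ) : ℝ)} = ↑(fib w) := by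
      ext v
      rw [hfibdef]
      simp only [Set.mem_setOf_eq, Finset.coe_filter]
      exact and_congr_left (fun _ => hvert v)
    have := hfiber w
    rw [hset, Set.ncard_coe_finset] at this
    exact this
  have hfib_mem : ∀ v ∈ Vf, ∀ w, (v ∈ fib w ↔ ∀ i, v (ι i) = ((w i : ℕ) : ℝ)) := by
    intro v hv w
    rw [hfibdef]
    simp only [Finset.mem_filter]
    exact ⟨fun h => h.2, fun h => ⟨hv, h⟩⟩
  -- the projection to the cube
  set π : (Fin d → ℝ) → (Fin k → Fin 2) :=
    fun v i => if v (ι i) = 1 then 1 else 0 with hπdef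
  have hπ : ∀ v ∈ Vf, v ∈ fib (π v) := by
    intro v hv
    rw [hfib_mem v hv]
    intro i
    rcases hF v (Finset.mem_of_mem_filter _ hv) (ι i) with h | h
    · rw [hπdef]; simp [h]
    · rw [hπdef]; simp [h]
  have hfib_eq : ∀ v w w', v ∈ fib w → v ∈ fib w' → w = w' := by
    intro v w w' h1 h2
    have hv : v ∈ Vf := Finset.mem_of_mem_filter _ h1
    funext i
    exact fin2_cast_inj (((hfib_mem v hv w).1 h1 i).symm.trans ((hfib_mem v hv w').1 h2 i))
  -- Key geometric claim (G1): mixed fibers contain a neighborhood vertex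
  have hG1 : ∀ w, (fib w ∩ Sf).Nonempty → ¬ (fib w ⊆ Sf) → (fib w ∩ Nf).Nonempty := by
    intro w hmix hnsub
    set Fw : Finset (Fin d → ℝ) :=
      F.filter (fun y => ∀ i ∈ (Finset.univ : Finset (Fin k)), y (ι i) = ((w i : ℕ) : ℝ)) with hFwdef
    have hexpFw : Exp F Fw := exp_coordFace hF ι Finset.univ w
    have hvFw : ∀ y, Exp Fw {y} ↔ y ∈ fib w := by
      intro y
      constructor
      · intro hy
        have hyFw : y ∈ Fw := hy.subset (Finset.mem_singleton_self y)
        have hyF : Exp F {y} := exp_trans hexpFw hy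
        have hyVf : y ∈ Vf := Finset.mem_filter.2 ⟨Finset.mem_of_mem_filter _ hyFw, hyF⟩
        rw [hfib_mem y hyVf]
        intro i
        exact (Finset.mem_filter.1 hyFw).2 i (Finset.mem_univ i)
      · intro hy
        have hyVf : y ∈ Vf := Finset.mem_of_mem_filter _ hy
        have hyF : y ∈ F := Finset.mem_of_mem_filter _ hyVf
        have hyExp : Exp F {y} := (Finset.mem_filter.1 hyVf).2
        have hyFw : y ∈ Fw := by
          rw [hFwdef, Finset.mem_filter]
          exact ⟨hyF, fun i _ => (hfib_mem y hyVf w).1 hy i⟩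
        exact exp_singleton_mono (Finset.filter_subset _ _) hyExp hyFw
    have hBne : (fib w \ Sf).Nonempty := by
      rw [Finset.sdiff_nonempty]
      exact hnsub
    obtain ⟨a, ha, b, hb, hab⟩ := crossing
      (fun y hy i => hF y (Finset.mem_of_mem_filter _ hy) i)
      (fib w ∩ Sf) (fib w \ Sf) hmix hBne
      (fun y hyA hyB => (Finset.mem_sdiff.1 hyB).2 (Finset.mem_inter.1 hyA).2)
      (by
        intro y
        rw [hvFw y]
        constructor
        · intro hy
          by_cases hyS : y ∈ Sf
          · exact Finset.mem_union_left _ (Finset.mem_inter.2 ⟨hy, hyS⟩)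
          · exact Finset.mem_union_right _ (Finset.mem_sdiff.2 ⟨hy, hyS⟩)
        · intro hy
          rcases Finset.mem_union.1 hy with h | h
          · exact (Finset.mem_inter.1 h).1
          · exact (Finset.mem_sdiff.1 h).1)
    obtain ⟨haf, haS⟩ := Finset.mem_inter.1 ha
    obtain ⟨hbf, hbS⟩ := Finset.mem_sdiff.1 hb
    have habne : a ≠ b := fun h => hbS (h ▸ haS)
    have hedge : IsEdgeOf P a b := isEdge_of_exp_pair hP habne (exp_trans hexpFw hab)
    have hbVf : b ∈ Vf := Finset.mem_of_mem_filter _ hbf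
    have hbNb : b ∈ polyNbhd P S := by
      refine ⟨(hvert b).2 hbVf, ?_, a, ?_, hedge⟩
      · intro hbS'
        exact hbS (Finset.mem_filter.2 ⟨hbVf, hbS'⟩)
      · exact (Finset.mem_filter.1 haS).2
    exact ⟨b, Finset.mem_inter.2 ⟨hbf, Finset.mem_filter.2 ⟨hbVf, hbNb⟩⟩⟩
  -- Key geometric claim (G2): lifted cube edges
  have hG2 : ∀ w w', (fib w ⊆ Sf) → ¬ (fib w' ⊆ Sf) → CubeAdj w w' →
      (fib w' ∩ Nf).Nonempty := by
    intro w w' hwT hw'T hadj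
    obtain ⟨j, hj⟩ := Finset.card_eq_one.1 hadj
    have hjdiff : w j ≠ w' j := by
      have : j ∈ Finset.univ.filter (fun i => w i ≠ w' i) := hj ▸ Finset.mem_singleton_self j
      exact (Finset.mem_filter.1 this).2
    have hoff : ∀ i, i ≠ j → w i = w' i := by
      intro i hi
      by_contra hne
      have : i ∈ Finset.univ.filter (fun i => w i ≠ w' i) :=
        Finset.mem_filter.2 ⟨Finset.mem_univ i, hne⟩
      rw [hj, Finset.mem_singleton] at this
      exact hi this
    set Fe : Finset (Fin d → ℝ) :=
      F.filter (fun y => ∀ i ∈ Finset.univ.erase j, y (ι i) = ((w i : ℕ) : ℝ)) with hFedef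
    have hexpFe : Exp F Fe := exp_coordFace hF ι (Finset.univ.erase j) w
    have hwne : w ≠ w' := fun h => hjdiff (congrFun h j)
    have hvFe : ∀ y, Exp Fe {y} ↔ y ∈ fib w ∪ fib w' := by
      intro y
      constructor
      · intro hy
        have hyFe : y ∈ Fe := hy.subset (Finset.mem_singleton_self y)
        have hyF : Exp F {y} := exp_trans hexpFe hy
        have hyVf : y ∈ Vf := Finset.mem_filter.2 ⟨Finset.mem_of_mem_filter _ hyFe, hyF⟩
        have hyco : ∀ i, i ≠ j → y (ι i) = ((w i : ℕ) : ℝ) := by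
          intro i hi
          exact (Finset.mem_filter.1 hyFe).2 i (Finset.mem_erase.2 ⟨hi, Finset.mem_univ i⟩)
        have hyj := hπ y hyVf
        have hπy : π y = w ∨ π y = w' := by
          have h1 : ∀ i, i ≠ j → π y i = w i := by
            intro i hi
            apply fin2_cast_inj
            rw [← (hfib_mem y hyVf (π y)).1 hyj i, hyco i hi]
          by_cases hjj : π y j = w j
          · left
            funext i
            by_cases hi : i = j
            · subst hi; exact hjj
            · exact h1 i hi
          · right
            funext i
            by_cases hi : i = j
            · subst hi; omega
            · rw [h1 i hi, hoff i hi]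
        rcases hπy with h | h
        · exact Finset.mem_union_left _ (h ▸ hyj)
        · exact Finset.mem_union_right _ (h ▸ hyj)
      · intro hy
        have hyVf : y ∈ Vf := by
          rcases Finset.mem_union.1 hy with h | h <;> exact Finset.mem_of_mem_filter _ h
        have hyF : y ∈ F := Finset.mem_of_mem_filter _ hyVf
        have hyExp : Exp F {y} := (Finset.mem_filter.1 hyVf).2
        have hyFe : y ∈ Fe := by
          rw [hFedef, Finset.mem_filter]
          refine ⟨hyF, fun i hi => ?_⟩
          have hij : i ≠ j := (Finset.mem_erase.1 hi).1
          rcases Finset.mem_union.1 hy with h | h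
          · exact (hfib_mem y hyVf w).1 h i
          · rw [(hfib_mem y hyVf w').1 h i, hoff i hij]
        exact exp_singleton_mono (Finset.filter_subset _ _) hyExp hyFe
    have hdisj : ∀ y, y ∈ fib w → y ∈ fib w' → False :=
      fun y h1 h2 => hwne (hfib_eq y w w' h1 h2)
    obtain ⟨a, ha, b, hb, hab⟩ := crossing
      (fun y hy i => hF y (Finset.mem_of_mem_filter _ hy) i)
      (fib w) (fib w') (hfib_ne w) (hfib_ne w') hdisj hvFe
    by_cases hbS : b ∈ Sf
    · exact hG1 w' ⟨b, Finset.mem_inter.2 ⟨hb, hbS⟩⟩ hw'T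
    · have habne : a ≠ b := fun h => hdisj b (h ▸ ha) hb
      have hedge : IsEdgeOf P a b := isEdge_of_exp_pair hP habne (exp_trans hexpFe hab)
      have hbVf : b ∈ Vf := Finset.mem_of_mem_filter _ hb
      have haS : a ∈ Sf := hwT ha
      have hbNb : b ∈ polyNbhd P S := by
        refine ⟨(hvert b).2 hbVf, ?_, a, ?_, hedge⟩
        · intro hbS'
          exact hbS (Finset.mem_filter.2 ⟨hbVf, hbS'⟩)
        · exact (Finset.mem_filter.1 haS).2
      exact ⟨b, Finset.mem_inter.2 ⟨hb, Finset.mem_filter.2 ⟨hbVf, hbNb⟩⟩⟩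
  -- cube-level sets
  set T : Finset (Fin k → Fin 2) := Finset.univ.filter (fun w => fib w ⊆ Sf) with hTdef
  set U : Finset (Fin k → Fin 2) := Finset.univ.filter (fun w => (fib w ∩ Sf).Nonempty) with hUdef
  set M : Finset (Fin k → Fin 2) := U \ T with hMdef
  set NT : Finset (Fin k → Fin 2) := cubeNbhd T with hNTdef
  set X : Finset (Fin k → Fin 2) := Finset.univ.filter (fun w => (fib w ∩ Nf).Nonempty) with hXdef
  set Dd : Finset (Fin k → Fin 2) := (Finset.univ \ T) \ (M ∪ NT) with hDdef
  have hMX : M ⊆ X := by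
    intro w hw
    obtain ⟨hwU, hwT⟩ := Finset.mem_sdiff.1 hw
    have h1 := (Finset.mem_filter.1 hwU).2
    have h2 : ¬ (fib w ⊆ Sf) := by
      intro hsub
      exact hwT (Finset.mem_filter.2 ⟨Finset.mem_univ w, hsub⟩)
    exact Finset.mem_filter.2 ⟨Finset.mem_univ w, hG1 w h1 h2⟩
  have hNTX : NT ⊆ X := by
    intro w' hw'
    rw [hNTdef, cubeNbhd, Finset.mem_filter] at hw'
    obtain ⟨_, hw'T, u, huT, hadj⟩ := hw'
    have hu : fib u ⊆ Sf := (Finset.mem_filter.1 huT).2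
    have hw'ns : ¬ (fib w' ⊆ Sf) := by
      intro hsub
      exact hw'T (Finset.mem_filter.2 ⟨Finset.mem_univ w', hsub⟩)
    exact Finset.mem_filter.2 ⟨Finset.mem_univ w', hG2 u w' hu hw'ns hadj⟩
  have hMNT_sub : M ∪ NT ⊆ Finset.univ \ T := by
    intro w hw
    rcases Finset.mem_union.1 hw with h | h
    · exact Finset.mem_sdiff.2 ⟨Finset.mem_univ w, (Finset.mem_sdiff.1 h).2⟩
    · rw [hNTdef, cubeNbhd, Finset.mem_filter] at h
      refine Finset.mem_sdiff.2 ⟨Finset.mem_univ w, ?_⟩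
      intro hwT
      exact h.2.1 hwT
  have hDnb : cubeNbhd Dd ⊆ M ∪ NT := by
    intro w' hw'
    rw [cubeNbhd, Finset.mem_filter] at hw'
    obtain ⟨_, hw'D, u, huD, hadj⟩ := hw'
    have huT : u ∉ T := by
      have := (Finset.mem_sdiff.1 (Finset.mem_sdiff.1 (hDdef ▸ huD)).1).2
      exact this
    have huNT : u ∉ M ∪ NT := (Finset.mem_sdiff.1 (hDdef ▸ huD)).2
    have hw'T : w' ∉ T := by
      intro hw'T
      apply huNT
      apply Finset.mem_union_right
      rw [hNTdef, cubeNbhd, Finset.mem_filter]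
      refine ⟨Finset.mem_univ u, huT, w', hw'T, ?_⟩
      rw [CubeAdj] at hadj ⊢
      rw [← hadj]
      apply congrArg
      apply Finset.filter_congr
      intro i _
      simp [ne_comm]
    by_contra hnot
    apply hw'D
    rw [hDdef]
    exact Finset.mem_sdiff.2 ⟨Finset.mem_sdiff.2 ⟨Finset.mem_univ w', hw'T⟩, hnot⟩
  -- counting
  have hcard_disj : ∀ (G : Finset (Fin d → ℝ)) (W : Finset (Fin k → Fin 2)),
      (∀ w ∈ W, (fib w ∩ G).Nonempty) → W.card ≤ G.card := by
    intro G W hW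
    have hsub : W.biUnion (fun w => fib w ∩ G) ⊆ G := by
      intro v hv
      obtain ⟨w, _, hvw⟩ := Finset.mem_biUnion.1 hv
      exact (Finset.mem_inter.1 hvw).2
    have hdisj : ∀ w₁ ∈ W, ∀ w₂ ∈ W, w₁ ≠ w₂ →
        Disjoint (fib w₁ ∩ G) (fib w₂ ∩ G) := by
      intro w₁ _ w₂ _ hne
      rw [Finset.disjoint_left]
      intro v hv1 hv2
      exact hne (hfib_eq v w₁ w₂ (Finset.mem_inter.1 hv1).1 (Finset.mem_inter.1 hv2).1)
    calc W.card = ∑ w ∈ W, 1 := by simp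
      _ ≤ ∑ w ∈ W, (fib w ∩ G).card :=
          Finset.sum_le_sum (fun w hw => Finset.card_pos.2 (hW w hw))
      _ = (W.biUnion (fun w => fib w ∩ G)).card := (Finset.card_biUnion hdisj).symm
      _ ≤ G.card := Finset.card_le_card hsub
  have hXNf : X.card ≤ Nf.card :=
    hcard_disj Nf X (fun w hw => (Finset.mem_filter.1 hw).2)
  have hcover : ∀ (G : Finset (Fin d → ℝ)) (W : Finset (Fin k → Fin 2)),
      (∀ v ∈ G, ∃ w ∈ W, v ∈ fib w) → G.card ≤ c * W.card := by
    intro G W hG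
    have hsub : G ⊆ W.biUnion fib := by
      intro v hv
      obtain ⟨w, hwW, hvw⟩ := hG v hv
      exact Finset.mem_biUnion.2 ⟨w, hwW, hvw⟩
    calc G.card ≤ (W.biUnion fib).card := Finset.card_le_card hsub
      _ ≤ ∑ w ∈ W, (fib w).card := Finset.card_biUnion_le
      _ ≤ ∑ w ∈ W, c := Finset.sum_le_sum (fun w _ => hfib_card w)
      _ = c * W.card := by rw [Finset.sum_const, smul_eq_mul, mul_comm]
  have hSU : Sf.card ≤ c * U.card := by
    apply hcover
    intro v hv
    have hvVf : v ∈ Vf := Finset.mem_of_mem_filter _ hv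
    refine ⟨π v, ?_, hπ v hvVf⟩
    exact Finset.mem_filter.2 ⟨Finset.mem_univ _, ⟨v, Finset.mem_inter.2 ⟨hπ v hvVf, hv⟩⟩⟩
  have hVT : (Vf \ Sf).card ≤ c * (Finset.univ \ T).card := by
    apply hcover
    intro v hv
    obtain ⟨hvVf, hvS⟩ := Finset.mem_sdiff.1 hv
    refine ⟨π v, ?_, hπ v hvVf⟩
    refine Finset.mem_sdiff.2 ⟨Finset.mem_univ _, ?_⟩
    intro hT
    exact hvS ((Finset.mem_filter.1 hT).2 (hπ v hvVf))
  have hUTM : U.card ≤ T.card + M.card := by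
    have : U ⊆ T ∪ M := by
      intro w hw
      by_cases hT : w ∈ T
      · exact Finset.mem_union_left _ hT
      · exact Finset.mem_union_right _ (Finset.mem_sdiff.2 ⟨hw, hT⟩)
    calc U.card ≤ (T ∪ M).card := Finset.card_le_card this
      _ ≤ T.card + M.card := Finset.card_union_le _ _
  have hsplitT : Dd.card + (M ∪ NT).card = (Finset.univ \ T).card := by
    rw [hDdef]
    exact Finset.card_sdiff_add_card_eq_card hMNT_sub
  have hTuniv : (Finset.univ \ T).card + T.card = 2 ^ k := by
    rw [Finset.card_sdiff_add_card_eq_card (Finset.subset_univ T), cube_card_univ]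
  have hScard' : 2 * Sf.card ≤ Vf.card := by
    have h1 : S.ncard = Sf.card := by rw [← hSfS, Set.ncard_coe_finset]
    have h2 : (polyVerts P).ncard = Vf.card := by rw [hpolyVf, Set.ncard_coe_finset]
    rw [h1, h2] at hScard
    exact hScard
  have hSfVf : Sf ⊆ Vf := Finset.filter_subset _ _
  have hVfS : Vf.card - Sf.card = (Vf \ Sf).card := (Finset.card_sdiff_of_subset hSfVf).symm
  -- real-number versions
  have hh0 : 0 ≤ cubeVertexExpansion k := cube_exp_nonneg k
  have hh1 : cubeVertexExpansion k ≤ 1 := cube_exp_le_one hkpos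
  set h : ℝ := cubeVertexExpansion k with hhdef
  have hgoal : cubeVertexExpansion k / (2 * (c:ℝ)) * (S.ncard : ℝ) ≤ ((polyNbhd P S).ncard : ℝ) →
      cubeVertexExpansion k / (2 * (c:ℝ)) * (S.ncard : ℝ) ≤ ((polyNbhd P S).ncard : ℝ) := id
  have hSn : (S.ncard : ℝ) = (Sf.card : ℝ) := by rw [← hSfS, Set.ncard_coe_finset]
  have hNn : ((polyNbhd P S).ncard : ℝ) = (Nf.card : ℝ) := by rw [← hNfN, Set.ncard_coe_finset]
  rw [hSn, hNn, div_mul_eq_mul_div, div_le_iff₀ (by positivity : (0:ℝ) < 2 * (c:ℝ))]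
  -- goal : h * Sf.card ≤ Nf.card * (2 * c)
  have hcR : (1:ℝ) ≤ (c:ℝ) := by exact_mod_cast hcpos
  have hfinal : h * (Sf.card : ℝ) ≤ (Nf.card : ℝ) * (2 * (c:ℝ)) := by
    by_cases hTle : 2 * T.card ≤ 2 ^ k
    · by_cases hTne : T.Nonempty
      · -- case B
        have hTexp : h * (T.card : ℝ) ≤ (NT.card : ℝ) := cube_exp_mul_le T hTne hTle
        have hNTx : (NT.card : ℝ) ≤ (X.card : ℝ) := by exact_mod_cast Finset.card_le_card hNTX
        have hMx : (M.card : ℝ) ≤ (X.card : ℝ) := by exact_mod_cast Finset.card_le_card hMX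
        have hSUr : (Sf.card : ℝ) ≤ (c:ℝ) * (U.card : ℝ) := by exact_mod_cast hSU
        have hUr : (U.card : ℝ) ≤ (T.card : ℝ) + (M.card : ℝ) := by exact_mod_cast hUTM
        have hXr : (X.card : ℝ) ≤ (Nf.card : ℝ) := by exact_mod_cast hXNf
        have q2 : h * (U.card : ℝ) ≤ h * (T.card : ℝ) + h * (M.card : ℝ) := by
          have := mul_le_mul_of_nonneg_left hUr hh0
          linarith [this, mul_add h (T.card : ℝ) (M.card : ℝ)]
        have q3 : h * (M.card : ℝ) ≤ (M.card : ℝ) := by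
          have := mul_le_mul_of_nonneg_right hh1 (Nat.cast_nonneg (α := ℝ) M.card)
          linarith
        have q6 : h * (U.card : ℝ) ≤ 2 * (Nf.card : ℝ) := by linarith
        calc h * (Sf.card : ℝ) ≤ h * ((c:ℝ) * (U.card : ℝ)) :=
              mul_le_mul_of_nonneg_left hSUr hh0
          _ = (c:ℝ) * (h * (U.card : ℝ)) := by ring
          _ ≤ (c:ℝ) * (2 * (Nf.card : ℝ)) :=
              mul_le_mul_of_nonneg_left q6 (Nat.cast_nonneg _)
          _ = (Nf.card : ℝ) * (2 * (c:ℝ)) := by ring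
      · -- case A : T empty
        have hTempty : T = ∅ := Finset.not_nonempty_iff_eq_empty.1 hTne
        have hMU : M = U := by rw [hMdef, hTempty, Finset.sdiff_empty]
        have hMx : (M.card : ℝ) ≤ (X.card : ℝ) := by exact_mod_cast Finset.card_le_card hMX
        have hSUr : (Sf.card : ℝ) ≤ (c:ℝ) * (U.card : ℝ) := by exact_mod_cast hSU
        have hXr : (X.card : ℝ) ≤ (Nf.card : ℝ) := by exact_mod_cast hXNf
        rw [← hMU] at hSUr
        have p1 : h * (Sf.card : ℝ) ≤ (Sf.card : ℝ) := by
          have := mul_le_mul_of_nonneg_right hh1 (Nat.cast_nonneg (α := ℝ) Sf.card)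
          linarith
        have p2 : (c:ℝ) * (M.card : ℝ) ≤ (c:ℝ) * (Nf.card : ℝ) :=
          mul_le_mul_of_nonneg_left (hMx.trans hXr) (Nat.cast_nonneg _)
        have p3 : (0:ℝ) ≤ (c:ℝ) * (Nf.card : ℝ) := by positivity
        have p4 : (Nf.card : ℝ) * (2 * (c:ℝ)) = 2 * ((c:ℝ) * (Nf.card : ℝ)) := by ring
        linarith
    · -- case C
      push_neg at hTle
      have hsc : Sf.card ≤ c * (Finset.univ \ T).card := by
        have h1 : Vf.card ≤ c * (Finset.univ \ T).card + Sf.card := by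
          have := hVT
          omega
        omega
      by_cases hDne : Dd.Nonempty
      · -- case C2
        have hDle : 2 * Dd.card ≤ 2 ^ k := by
          have h1 : Dd.card + (M ∪ NT).card = (Finset.univ \ T).card := hsplitT
          omega
        have hDexp : h * (Dd.card : ℝ) ≤ ((cubeNbhd Dd).card : ℝ) := cube_exp_mul_le Dd hDne hDle
        have hDnb' : ((cubeNbhd Dd).card : ℝ) ≤ ((M ∪ NT).card : ℝ) := by
          exact_mod_cast Finset.card_le_card hDnb
        have hMNTX : ((M ∪ NT).card : ℝ) ≤ (X.card : ℝ) := by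
          apply Nat.cast_le.2
          apply Finset.card_le_card
          intro w hw
          rcases Finset.mem_union.1 hw with hh | hh
          · exact hMX hh
          · exact hNTX hh
        have hTc : (Dd.card : ℝ) + ((M ∪ NT).card : ℝ) = ((Finset.univ \ T).card : ℝ) := by
          exact_mod_cast hsplitT
        have hscr : (Sf.card : ℝ) ≤ (c:ℝ) * ((Finset.univ \ T).card : ℝ) := by exact_mod_cast hsc
        have hXr : (X.card : ℝ) ≤ (Nf.card : ℝ) := by exact_mod_cast hXNf
        have r1 : h * ((Finset.univ \ T).card : ℝ) ≤ 2 * (Nf.card : ℝ) := by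
          have e1 : h * ((Finset.univ \ T).card : ℝ) =
              h * (Dd.card : ℝ) + h * ((M ∪ NT).card : ℝ) := by rw [← hTc]; ring
          have e2 : h * ((M ∪ NT).card : ℝ) ≤ ((M ∪ NT).card : ℝ) := by
            have := mul_le_mul_of_nonneg_right hh1 (Nat.cast_nonneg (α := ℝ) (M ∪ NT).card)
            linarith
          linarith
        calc h * (Sf.card : ℝ) ≤ h * ((c:ℝ) * ((Finset.univ \ T).card : ℝ)) :=
              mul_le_mul_of_nonneg_left hscr hh0
          _ = (c:ℝ) * (h * ((Finset.univ \ T).card : ℝ)) := by ring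
          _ ≤ (c:ℝ) * (2 * (Nf.card : ℝ)) :=
              mul_le_mul_of_nonneg_left r1 (Nat.cast_nonneg _)
          _ = (Nf.card : ℝ) * (2 * (c:ℝ)) := by ring
      · -- case C1 : Dd empty
        have hDempty : Dd = ∅ := Finset.not_nonempty_iff_eq_empty.1 hDne
        have h1 : (M ∪ NT).card = (Finset.univ \ T).card := by
          have := hsplitT
          rw [hDempty] at this
          simpa using this
        have hMNTX : (M ∪ NT).card ≤ X.card := by
          apply Finset.card_le_card
          intro w hw
          rcases Finset.mem_union.1 hw with hh | hh
          · exact hMX hh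
          · exact hNTX hh
        have hscr : (Sf.card : ℝ) ≤ (c:ℝ) * (X.card : ℝ) := by
          have : Sf.card ≤ c * X.card := by
            calc Sf.card ≤ c * (Finset.univ \ T).card := hsc
              _ = c * (M ∪ NT).card := by rw [h1]
              _ ≤ c * X.card := Nat.mul_le_mul_left c hMNTX
          exact_mod_cast this
        have hXr : (X.card : ℝ) ≤ (Nf.card : ℝ) := by exact_mod_cast hXNf
        have p1 : h * (Sf.card : ℝ) ≤ (Sf.card : ℝ) := by
          have := mul_le_mul_of_nonneg_right hh1 (Nat.cast_nonneg (α := ℝ) Sf.card)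
          linarith
        have p2 : (c:ℝ) * (X.card : ℝ) ≤ (c:ℝ) * (Nf.card : ℝ) :=
          mul_le_mul_of_nonneg_left hXr (Nat.cast_nonneg _)
        have p3 : (0:ℝ) ≤ (c:ℝ) * (Nf.card : ℝ) := by positivity
        have p4 : (Nf.card : ℝ) * (2 * (c:ℝ)) = 2 * ((c:ℝ) * (Nf.card : ℝ)) := by ring
        linarith
  exact hfinal
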